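/- arXiv:2206.02198 — 2 statements merged into one kernel-verified Lean document; each statement's English description precedes it below -/
import Mathlib

section
/- For λ_1 ≥ 0 and λ_{123'} ≥ 0, the vector λ_1·e_1 + λ_{123'}·e_{123'} ∈ ℝ^7 is an entropy vector of three finite-alphabet random variables if and only if λ_{123'} = log₂ m for some positive integer m. -/
open Finset

/-- Probability that the discrete random variable `X` (on finite sample space `Fin N`
with probability mass function `p`) takes the value `a`. -/
noncomputable def pr {N : ℕ} (p : Fin N → ℝ) {A : Type} [DecidableEq A]
    (X : Fin N → A) (a : A) : ℝ :=
  ∑ ω, if X ω = a then p ω else 0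

/-- Base-2 Shannon entropy of the random variable `X` under the pmf `p`. -/
noncomputable def ent {N : ℕ} (p : Fin N → ℝ) {A : Type} [Fintype A] [DecidableEq A]
    (X : Fin N → A) : ℝ :=
  -∑ a, pr p X a * Real.logb 2 (pr p X a)

/-- `p` is a probability mass function. -/
def IsDist {N : ℕ} (p : Fin N → ℝ) : Prop :=
  (∀ ω, 0 ≤ p ω) ∧ ∑ ω, p ω = 1

/-- The entropy vector of three finite-alphabet random variables, with components
(H(X₁), H(X₂), H(X₃), H(X₁X₂), H(X₁X₃), H(X₂X₃), H(X₁X₂X₃)). -/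
noncomputable def entVec3 {N a₁ a₂ a₃ : ℕ} (p : Fin N → ℝ)
    (X₁ : Fin N → Fin a₁) (X₂ : Fin N → Fin a₂) (X₃ : Fin N → Fin a₃) : Fin 7 → ℝ :=
  ![ent p X₁, ent p X₂, ent p X₃,
    ent p (fun ω => (X₁ ω, X₂ ω)),
    ent p (fun ω => (X₁ ω, X₃ ω)),
    ent p (fun ω => (X₂ ω, X₃ ω)),
    ent p (fun ω => (X₁ ω, X₂ ω, X₃ ω))]

/-- `h ∈ ℝ⁷` is the entropy vector of some triple of finite-alphabet random variables. -/
def IsEntropic (h : Fin 7 → ℝ) : Prop :=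
  ∃ (N a₁ a₂ a₃ : ℕ) (p : Fin N → ℝ)
    (X₁ : Fin N → Fin a₁) (X₂ : Fin N → Fin a₂) (X₃ : Fin N → Fin a₃),
    IsDist p ∧ entVec3 p X₁ X₂ X₃ = h

noncomputable def e1 : Fin 7 → ℝ := ![1,0,0,1,1,0,1]
noncomputable def e2 : Fin 7 → ℝ := ![0,1,0,1,0,1,1]
noncomputable def e3 : Fin 7 → ℝ := ![0,0,1,0,1,1,1]
noncomputable def e12 : Fin 7 → ℝ := ![1,1,0,1,1,1,1]
noncomputable def e13 : Fin 7 → ℝ := ![1,0,1,1,1,1,1]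
noncomputable def e23 : Fin 7 → ℝ := ![0,1,1,1,1,1,1]
noncomputable def e123 : Fin 7 → ℝ := ![1,1,1,1,1,1,1]
noncomputable def e123' : Fin 7 → ℝ := ![1,1,1,2,2,2,2]

/-!
If `l₁ • e1 + l • e123'` is the entropy vector of `(X₁, X₂, X₃)`, the three variables are
pairwise independent and each of `X₂`, `X₃` is a function of `X₁` and the other one. For values
`b`, `c` of positive probability independence gives some `a` with `P(a, b, c) > 0`, and then
`P(a) P(c) = P(a, c) = P(a, b, c) = P(a, b) = P(a) P(b)`. So `X₂` is uniform on its support and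
`l = H(X₂) = log₂ m`. Conversely, take `U` of entropy `l₁` (by the intermediate value theorem)
and `Z`, `Y` uniform on `ℤ/m`, all independent: `((U, Z), Y, Z + Y)` realizes
`l₁ • e1 + log₂ m • e123'`.
-/

open Real

section Law

variable {N : ℕ} {p : Fin N → ℝ} {A B : Type} [DecidableEq A] [DecidableEq B]

lemma pr_nonneg (hp : ∀ ω, 0 ≤ p ω) (X : Fin N → A) (a : A) : 0 ≤ pr p X a :=
  Finset.sum_nonneg fun ω _ => by split_ifs <;> simp [hp ω]

lemma sum_pr_mul [Fintype A] (X : Fin N → A) (φ : A → ℝ) :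
    ∑ a, pr p X a * φ a = ∑ ω, p ω * φ (X ω) := by
  simp only [pr, Finset.sum_mul, ite_mul, zero_mul]
  rw [Finset.sum_comm]
  simp [Finset.sum_ite_eq]

lemma sum_pr [Fintype A] (hp : IsDist p) (X : Fin N → A) : ∑ a, pr p X a = 1 := by
  simpa [hp.2] using sum_pr_mul (p := p) X fun _ => 1

lemma ent_eq_neg_sum [Fintype A] (X : Fin N → A) :
    ent p X = -∑ ω, p ω * logb 2 (pr p X (X ω)) :=
  congrArg Neg.neg (sum_pr_mul X fun a => logb 2 (pr p X a))

lemma pr_comp [Fintype A] (X : Fin N → A) (g : A → B) (b : B) :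
    pr p (fun ω => g (X ω)) b = ∑ a, if g a = b then pr p X a else 0 := by
  have := sum_pr_mul (p := p) X fun a => if g a = b then 1 else 0
  simp only [mul_ite, mul_one, mul_zero] at this
  exact this.symm

lemma pr_le_pr_comp (hp : ∀ ω, 0 ≤ p ω) (X : Fin N → A) (g : A → B) (a : A) :
    pr p X a ≤ pr p (fun ω => g (X ω)) (g a) :=
  Finset.sum_le_sum fun ω _ => by split_ifs <;> simp_all [hp ω]

lemma pr_comp_of_injective (X : Fin N → A) {g : A → B} (hg : Function.Injective g) (a : A) :
    pr p (fun ω => g (X ω)) (g a) = pr p X a := by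
  simp only [pr, hg.eq_iff]

lemma ent_comp_of_injective [Fintype A] [Fintype B] (X : Fin N → A) {g : A → B}
    (hg : Function.Injective g) : ent p (fun ω => g (X ω)) = ent p X := by
  simp only [ent_eq_neg_sum, pr_comp_of_injective X hg]

lemma exists_pr_ne_zero_of_pr_comp_ne_zero [Fintype A] (X : Fin N → A) (g : A → B) {b : B}
    (h : pr p (fun ω => g (X ω)) b ≠ 0) : ∃ a, g a = b ∧ pr p X a ≠ 0 := by
  rw [pr_comp] at h
  obtain ⟨a, -, ha⟩ := Finset.exists_ne_zero_of_sum_ne_zero h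
  split_ifs at ha with hga
  · exact ⟨a, hga, ha⟩
  · exact absurd rfl ha

end Law

lemma sub_lt_mul_log_sub_log {x y : ℝ} (hx : 0 ≤ x) (hy : 0 < y) (hxy : x ≠ y) :
    x - y < x * (log x - log y) := by
  rcases hx.eq_or_lt with rfl | hx
  · simpa using hy
  have key := self_sub_one_lt_mul_log (div_pos hx hy).le
    (by rwa [ne_eq, div_eq_one_iff_eq hy.ne'])
  rw [log_div hx.ne' hy.ne'] at key
  have := mul_lt_mul_of_pos_left key hy
  field_simp at this
  linarith

theorem eq_of_sum_mul_log_eq {ι : Type*} [Fintype ι] {f g : ι → ℝ} (hf : ∀ i, 0 ≤ f i)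
    (hg : ∀ i, 0 ≤ g i) (hfg : ∀ i, g i = 0 → f i = 0) (hsum : ∑ i, f i = ∑ i, g i)
    (h : ∑ i, f i * log (f i) = ∑ i, f i * log (g i)) : f = g := by
  set t := fun i => f i * (log (f i) - log (g i)) - (f i - g i)
  have ht : ∀ i, f i ≠ g i → 0 < t i := fun i hi => sub_pos.2 <|
    sub_lt_mul_log_sub_log (hf i) ((hg i).lt_of_ne fun h0 => hi (by rw [← h0, hfg i h0.symm])) hi
  have ht0 : ∀ i, 0 ≤ t i := fun i =>
    (eq_or_ne (f i) (g i)).elim (fun he => by simp [t, he]) fun hi => (ht i hi).le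
  have hsum_t : ∑ i, t i = 0 := by
    simp only [t, Finset.sum_sub_distrib, mul_sub, h, hsum, sub_self]
  by_contra hne
  obtain ⟨i, hi⟩ := Function.ne_iff.1 hne
  exact (Finset.sum_pos' (fun i _ => ht0 i) ⟨i, Finset.mem_univ _, ht i hi⟩).ne' hsum_t

section Equality

variable {N : ℕ} {p : Fin N → ℝ} {A B C : Type} [Fintype A] [DecidableEq A] [Fintype B]
  [DecidableEq B] [Fintype C] [DecidableEq C]

lemma pr_pair_eq_mul_of_ent_pair_eq_add (hp : IsDist p) (X : Fin N → A) (Y : Fin N → B)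
    (h : ent p (fun ω => (X ω, Y ω)) = ent p X + ent p Y) (a : A) (b : B) :
    pr p (fun ω => (X ω, Y ω)) (a, b) = pr p X a * pr p Y b := by
  have hf := pr_nonneg hp.1 fun ω => (X ω, Y ω)
  have hfX : ∀ v, pr p (fun ω => (X ω, Y ω)) v ≤ pr p X v.1 := pr_le_pr_comp hp.1 _ Prod.fst
  have hfY : ∀ v, pr p (fun ω => (X ω, Y ω)) v ≤ pr p Y v.2 := pr_le_pr_comp hp.1 _ Prod.snd
  have hlog : ∀ v, pr p (fun ω => (X ω, Y ω)) v * logb 2 (pr p X v.1 * pr p Y v.2) =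
      pr p (fun ω => (X ω, Y ω)) v * logb 2 (pr p X v.1) +
        pr p (fun ω => (X ω, Y ω)) v * logb 2 (pr p Y v.2) := by
    intro v
    rcases (hf v).eq_or_lt with h0 | h0
    · simp [← h0]
    · rw [logb_mul (h0.trans_le (hfX v)).ne' (h0.trans_le (hfY v)).ne', mul_add]
  have hcross : ∑ v, pr p (fun ω => (X ω, Y ω)) v * logb 2 (pr p (fun ω => (X ω, Y ω)) v) =
      ∑ v, pr p (fun ω => (X ω, Y ω)) v * logb 2 (pr p X v.1 * pr p Y v.2) := by
    rw [Finset.sum_congr rfl fun v _ => hlog v, Finset.sum_add_distrib, sum_pr_mul, sum_pr_mul,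
      sum_pr_mul]
    simp only [ent_eq_neg_sum] at h
    linarith
  refine congrFun (eq_of_sum_mul_log_eq (g := fun v => pr p X v.1 * pr p Y v.2) hf
    (fun v => mul_nonneg (pr_nonneg hp.1 _ _) (pr_nonneg hp.1 _ _)) (fun v hv => ?_) ?_ ?_) (a, b)
  · rcases mul_eq_zero.1 hv with h0 | h0
    · exact le_antisymm (h0 ▸ hfX v) (hf v)
    · exact le_antisymm (h0 ▸ hfY v) (hf v)
  · simp only [sum_pr hp, Fintype.sum_prod_type, ← Finset.sum_mul_sum, one_mul]
  · simpa only [logb, mul_div_assoc', ← Finset.sum_div, div_left_inj' (log_pos one_lt_two).ne']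
      using hcross

lemma pr_eq_zero_or_eq_of_ent_comp_eq (hp : ∀ ω, 0 ≤ p ω) (X : Fin N → A) (g : A → B)
    (h : ent p (fun ω => g (X ω)) = ent p X) (a : A) :
    pr p X a = 0 ∨ pr p X a = pr p (fun ω => g (X ω)) (g a) := by
  set W := fun ω => g (X ω)
  set t := fun a => pr p X a * (logb 2 (pr p W (g a)) - logb 2 (pr p X a))
  have hle := pr_le_pr_comp hp X g
  have ht : ∀ a, 0 < pr p X a → pr p X a ≠ pr p W (g a) → 0 < t a := fun a h0 hne =>
    mul_pos h0 (sub_pos.2 (logb_lt_logb one_lt_two h0 ((hle a).lt_of_ne hne)))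
  have ht0 : ∀ a, 0 ≤ t a := fun a => by
    rcases (pr_nonneg hp X a).eq_or_lt with h0 | h0
    · simp [t, ← h0]
    · exact mul_nonneg h0.le (sub_nonneg.2 (logb_le_logb_of_le one_lt_two h0 (hle a)))
  have hsum : ∑ a, t a = 0 := by
    simp only [t, mul_sub, Finset.sum_sub_distrib]
    rw [sum_pr_mul, sum_pr_mul]
    simp only [ent_eq_neg_sum, W] at h
    linarith
  by_contra hne
  push Not at hne
  exact (Finset.sum_pos' (fun a _ => ht0 a) ⟨a, Finset.mem_univ _,
    ht a ((pr_nonneg hp X a).lt_of_ne' hne.1) hne.2⟩).ne' hsum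

lemma exists_ent_eq_logb_of_pr_eq_zero_or_eq (hp : IsDist p) (X : Fin N → A) (α : ℝ)
    (h : ∀ a, pr p X a = 0 ∨ pr p X a = α) : ∃ m : ℕ, 0 < m ∧ ent p X = logb 2 m := by
  set S := Finset.univ.filter fun a => pr p X a ≠ 0
  have hS : ∀ a ∈ S, pr p X a = α := fun a ha => (h a).resolve_left (Finset.mem_filter.1 ha).2
  have hmass : (#S : ℝ) * α = 1 := by
    rw [← sum_pr hp X, ← Finset.sum_filter_ne_zero, Finset.sum_congr rfl hS, Finset.sum_const,
      nsmul_eq_mul]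
  refine ⟨#S, Nat.pos_of_ne_zero fun h0 => by simp [h0] at hmass, ?_⟩
  rw [ent, ← Finset.sum_filter_of_ne fun a _ h => left_ne_zero_of_mul h,
    Finset.sum_congr rfl fun a ha => by rw [hS a ha], Finset.sum_const, nsmul_eq_mul, ← mul_assoc,
    hmass, one_mul, eq_inv_of_mul_eq_one_right hmass, logb_inv, neg_neg]

theorem exists_ent_eq_logb_of_pairwise_indep (hp : IsDist p) (X₁ : Fin N → A) (X₂ : Fin N → B)
    (X₃ : Fin N → C)
    (h12 : ent p (fun ω => (X₁ ω, X₂ ω)) = ent p X₁ + ent p X₂)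
    (h13 : ent p (fun ω => (X₁ ω, X₃ ω)) = ent p X₁ + ent p X₃)
    (h23 : ent p (fun ω => (X₂ ω, X₃ ω)) = ent p X₂ + ent p X₃)
    (h2 : ent p (fun ω => (X₁ ω, X₃ ω)) = ent p (fun ω => (X₁ ω, X₂ ω, X₃ ω)))
    (h3 : ent p (fun ω => (X₁ ω, X₂ ω)) = ent p (fun ω => (X₁ ω, X₂ ω, X₃ ω))) :
    ∃ m : ℕ, 0 < m ∧ ent p X₂ = logb 2 m := by
  set V := fun ω => (X₁ ω, X₂ ω, X₃ ω)
  obtain ⟨c, -, hc⟩ := Finset.exists_ne_zero_of_sum_ne_zero (s := Finset.univ)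
    (f := pr p X₃) (by rw [sum_pr hp]; exact one_ne_zero)
  refine exists_ent_eq_logb_of_pr_eq_zero_or_eq hp X₂ (pr p X₃ c) fun b =>
    or_iff_not_imp_left.2 fun hb => ?_
  have hbc : pr p (fun ω => (X₂ ω, X₃ ω)) (b, c) ≠ 0 := by
    rw [pr_pair_eq_mul_of_ent_pair_eq_add hp X₂ X₃ h23]
    exact mul_ne_zero hb hc
  obtain ⟨⟨a, b', c'⟩, hv, ha⟩ := exists_pr_ne_zero_of_pr_comp_ne_zero V Prod.snd hbc
  obtain ⟨rfl, rfl⟩ := Prod.mk.inj hv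
  have hac := (pr_eq_zero_or_eq_of_ent_comp_eq hp.1 V (fun v => (v.1, v.2.2)) h2 _).resolve_left ha
  have hab := (pr_eq_zero_or_eq_of_ent_comp_eq hp.1 V (fun v => (v.1, v.2.1)) h3 _).resolve_left ha
  dsimp only [V] at hac hab
  rw [pr_pair_eq_mul_of_ent_pair_eq_add hp X₁ X₃ h13] at hac
  rw [pr_pair_eq_mul_of_ent_pair_eq_add hp X₁ X₂ h12] at hab
  exact mul_left_cancel₀ (left_ne_zero_of_mul (hac ▸ ha)) (hab.symm.trans hac)

end Equality

lemma entVec3_eq_smul_e1_add_smul_e123'_iff {N a₁ a₂ a₃ : ℕ} (p : Fin N → ℝ) (X₁ : Fin N → Fin a₁)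
    (X₂ : Fin N → Fin a₂) (X₃ : Fin N → Fin a₃) (l₁ l : ℝ) :
    entVec3 p X₁ X₂ X₃ = l₁ • e1 + l • e123' ↔
      ent p X₁ = l₁ + l ∧ ent p X₂ = l ∧ ent p X₃ = l ∧
      ent p (fun ω => (X₁ ω, X₂ ω)) = l₁ + 2 * l ∧ ent p (fun ω => (X₁ ω, X₃ ω)) = l₁ + 2 * l ∧
      ent p (fun ω => (X₂ ω, X₃ ω)) = 2 * l ∧ ent p (fun ω => (X₁ ω, X₂ ω, X₃ ω)) = l₁ + 2 * l := by
  simp [funext_iff, Fin.forall_fin_succ, entVec3, e1, e123', mul_comm l]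

lemma exists_isDist_neg_sum_mul_logb_eq {l : ℝ} (hl : 0 ≤ l) :
    ∃ (K : ℕ) (q : Fin K → ℝ), IsDist q ∧ -∑ u, q u * logb 2 (q u) = l := by
  set k := ⌈l⌉₊
  have hK : (0 : ℝ) < 2 ^ k := by positivity
  have : NeZero (2 ^ k) := ⟨by positivity⟩
  -- mix the point mass at `0` (entropy `0`) with the uniform law on `2 ^ k` points
  -- (entropy `k ≥ l`)
  set Q : ℝ → Fin (2 ^ k) → ℝ := fun t u => (1 - t) * (if u = 0 then 1 else 0) + t / 2 ^ k
  set E : ℝ → ℝ := fun t => -∑ u, Q t u * logb 2 (Q t u)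
  have hE : Continuous E := by
    have : E = fun t => ∑ u, negMulLog (Q t u) / log 2 := by
      ext t
      simp only [E, negMulLog, logb, ← Finset.sum_neg_distrib]
      exact Finset.sum_congr rfl fun _ _ => by ring
    rw [this]
    fun_prop
  have hE0 : E 0 = 0 := by simp [E, Q]
  have hE1 : E 1 = k := by simp [E, Q, logb_pow]
  obtain ⟨t, ht, hEt⟩ := intermediate_value_Icc zero_le_one hE.continuousOn
    (show l ∈ Set.Icc (E 0) (E 1) by rw [hE0, hE1]; exact ⟨hl, Nat.le_ceil l⟩)
  refine ⟨2 ^ k, Q t, ⟨fun u => ?_, ?_⟩, hEt⟩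
  · have := ht.1
    have := sub_nonneg.2 ht.2
    positivity
  · simp [Q, Finset.sum_add_distrib, mul_div_cancel₀ _ hK.ne']

section Realization

variable {N : ℕ} {p : Fin N → ℝ} {A B : Type} [Fintype A] [DecidableEq A] [Fintype B]
  [DecidableEq B]

lemma ent_eq_logb_card_of_pr_eq (X : Fin N → A) (hX : ∀ a, pr p X a = 1 / Fintype.card A) :
    ent p X = logb 2 (Fintype.card A) := by
  rcases isEmpty_or_nonempty A with hA | hA
  · simp [ent]
  simp [ent, hX, logb_inv]

lemma ent_eq_of_pr_eq_div [Nonempty B] (X : Fin N → A × B) {q : A → ℝ} (hq : ∑ a, q a = 1)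
    (hX : ∀ a b, pr p X (a, b) = q a / Fintype.card B) :
    ent p X = -∑ a, q a * logb 2 (q a) + logb 2 (Fintype.card B) := by
  have hB : (Fintype.card B : ℝ) ≠ 0 := by positivity
  have hterm : ∀ a, ∑ _b : B, q a / Fintype.card B * logb 2 (q a / Fintype.card B) =
      q a * logb 2 (q a) - q a * logb 2 (Fintype.card B) := fun a => by
    rcases eq_or_ne (q a) 0 with h0 | h0
    · simp [h0]
    · rw [Finset.sum_const, Finset.card_univ, nsmul_eq_mul, logb_div h0 hB]
      field_simp
  simp only [ent, Fintype.sum_prod_type, hX, hterm, Finset.sum_sub_distrib, ← Finset.sum_mul, hq]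
  ring

end Realization

lemma exists_isDist_pr_eq {Ω : Type} [Fintype Ω] [DecidableEq Ω] {P : Ω → ℝ}
    (hP₀ : ∀ v, 0 ≤ P v) (hP₁ : ∑ v, P v = 1) :
    ∃ (N : ℕ) (p : Fin N → ℝ) (V : Fin N → Ω), IsDist p ∧ ∀ v, pr p V v = P v := by
  set e := Fintype.equivFin Ω
  refine ⟨_, fun ω => P (e.symm ω), e.symm, ⟨fun ω => hP₀ _, by rwa [e.symm.sum_comp]⟩, fun v => ?_⟩
  rw [pr, Finset.sum_eq_single (e v) (fun ω _ hω => if_neg fun h => hω (by simp [← h])) (by simp)]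
  simp

theorem isEntropic_smul_e1_add_logb_smul_e123' {l₁ : ℝ} (hl₁ : 0 ≤ l₁) {m : ℕ} (hm : 0 < m) :
    IsEntropic (l₁ • e1 + logb 2 m • e123') := by
  have : NeZero m := ⟨hm.ne'⟩
  have hm' : (m : ℝ) ≠ 0 := by positivity
  obtain ⟨K, q, hq, rfl⟩ := exists_isDist_neg_sum_mul_logb_eq hl₁
  obtain ⟨N, p, V, hp, hV⟩ := exists_isDist_pr_eq
    (P := fun v : Fin K × Fin m × Fin m => q v.1 / (m * m))
    (fun v => by have := hq.1 v.1; positivity)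
    (by simp [Fintype.sum_prod_type, ← Finset.sum_div, ← Finset.mul_sum, hq.2, hm'])
  -- `V = (U, Z, Y)` with `U ∼ q` and `Z`, `Y` uniform on `Fin m`, all independent
  have hlaw : ∀ {B : Type} [DecidableEq B] (g : Fin K × Fin m × Fin m → B) (b : B),
      pr p (fun ω => g (V ω)) b = ∑ v, if g v = b then q v.1 / (m * m) else 0 := fun g b => by
    simp only [pr_comp, hV]
  have hUZY : ent p V = -∑ u, q u * logb 2 (q u) + 2 * logb 2 m := by
    rw [ent_eq_of_pr_eq_div V hq.2 fun u zy => by simp [hV], Fintype.card_prod, Fintype.card_fin]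
    push_cast
    rw [logb_mul hm' hm']
    ring
  have hUZ : ent p (fun ω => ((V ω).1, (V ω).2.1)) = -∑ u, q u * logb 2 (q u) + logb 2 m := by
    rw [ent_eq_of_pr_eq_div _ hq.2 fun u z => ?_, Fintype.card_fin]
    rw [hlaw (fun v => (v.1, v.2.1))]
    simp [Fintype.sum_prod_type, ite_and, Finset.sum_comm (γ := Fin m)]
    field_simp
  have hY : ent p (fun ω => (V ω).2.2) = logb 2 m := by
    rw [ent_eq_logb_card_of_pr_eq _ fun y => ?_, Fintype.card_fin]
    rw [hlaw (fun v => v.2.2)]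
    simp [Fintype.sum_prod_type, ← Finset.mul_sum, ← Finset.sum_div, hq.2]
    field_simp
  have hZY : ent p (fun ω => (V ω).2.1 + (V ω).2.2) = logb 2 m := by
    rw [ent_eq_logb_card_of_pr_eq _ fun c => ?_, Fintype.card_fin]
    rw [hlaw (fun v => v.2.1 + v.2.2)]
    simp [Fintype.sum_prod_type, ← eq_sub_iff_add_eq', ← Finset.mul_sum, ← Finset.sum_div, hq.2]
    field_simp
  have hYZY : ent p (fun ω => ((V ω).2.2, (V ω).2.1 + (V ω).2.2)) = 2 * logb 2 m := by
    rw [ent_eq_logb_card_of_pr_eq _ fun yc => ?_, Fintype.card_prod, Fintype.card_fin]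
    · push_cast
      rw [logb_mul hm' hm']
      ring
    rw [hlaw (fun v => (v.2.2, v.2.1 + v.2.2))]
    obtain ⟨y, c⟩ := yc
    simp [Fintype.sum_prod_type, ← eq_sub_iff_add_eq, ite_and, ← Finset.sum_div, hq.2]
  have hinj12 : Function.Injective fun v : Fin K × Fin m × Fin m =>
      (finProdFinEquiv (v.1, v.2.1), v.2.2) := by
    rintro ⟨u, z, y⟩ ⟨u', z', y'⟩ h
    simp only [Prod.mk.injEq, EmbeddingLike.apply_eq_iff_eq] at h
    obtain ⟨⟨rfl, rfl⟩, rfl⟩ := h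
    rfl
  have hinj13 : Function.Injective fun v : Fin K × Fin m × Fin m =>
      (finProdFinEquiv (v.1, v.2.1), v.2.1 + v.2.2) := by
    rintro ⟨u, z, y⟩ ⟨u', z', y'⟩ h
    simp only [Prod.mk.injEq, EmbeddingLike.apply_eq_iff_eq] at h
    obtain ⟨⟨rfl, rfl⟩, h⟩ := h
    rw [add_left_cancel h]
  have hinj : Function.Injective fun v : Fin K × Fin m × Fin m =>
      (finProdFinEquiv (v.1, v.2.1), v.2.2, v.2.1 + v.2.2) := fun v w h =>
    hinj12 (congrArg (fun x => (x.1, x.2.1)) h)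
  refine ⟨N, K * m, m, m, p, fun ω => finProdFinEquiv ((V ω).1, (V ω).2.1), fun ω => (V ω).2.2,
    fun ω => (V ω).2.1 + (V ω).2.2, hp,
    (entVec3_eq_smul_e1_add_smul_e123'_iff _ _ _ _ _ _).2 ⟨?_, hY, hZY, ?_, ?_, hYZY, ?_⟩⟩
  · rw [ent_comp_of_injective (fun ω => ((V ω).1, (V ω).2.1)) finProdFinEquiv.injective, hUZ]
  · rw [ent_comp_of_injective V hinj12, hUZY]
  · rw [ent_comp_of_injective V hinj13, hUZY]
  · rw [ent_comp_of_injective V hinj, hUZY]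

theorem stmt4_general (l1 l : ℝ) (h1 : 0 ≤ l1) :
    IsEntropic (l1 • e1 + l • e123') ↔ ∃ m : ℕ, 0 < m ∧ l = Real.logb 2 (m : ℝ) := by
  constructor
  · rintro ⟨N, a₁, a₂, a₃, p, X₁, X₂, X₃, hp, hvec⟩
    obtain ⟨c₁, c₂, c₃, c₁₂, c₁₃, c₂₃, c₁₂₃⟩ :=
      (entVec3_eq_smul_e1_add_smul_e123'_iff p X₁ X₂ X₃ l1 l).1 hvec
    obtain ⟨m, hm, hX₂⟩ := exists_ent_eq_logb_of_pairwise_indep hp X₁ X₂ X₃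
      (by linarith) (by linarith) (by linarith) (by linarith) (by linarith)
    exact ⟨m, hm, c₂ ▸ hX₂⟩
  · rintro ⟨m, hm, rfl⟩
    exact isEntropic_smul_e1_add_logb_smul_e123' h1 hm

/-- λ₁·e₁ + λ₁₂₃'·e₁₂₃' is entropic iff λ₁₂₃' = log₂ m for some positive integer m. -/
theorem stmt4 (l1 l : ℝ) (h1 : 0 ≤ l1) (hl : 0 ≤ l) :
    IsEntropic (l1 • e1 + l • e123') ↔ ∃ m : ℕ, 0 < m ∧ l = Real.logb 2 (m : ℝ) :=
  stmt4_general l1 l h1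
end

section
/- Let λ_1, λ_2, λ_3, λ_{12}, λ_{123'} ≥ 0 and suppose that at least one of the following holds: (a) λ_{12} + λ_{123'} ≥ log₂ ⌈2^{λ_{123'}}⌉, or (b) λ_{123'} = log₂ m for some positive integer m. Then λ_1·e_1 + λ_2·e_2 + λ_3·e_3 + λ_{12}·e_{12} + λ_{123'}·e_{123'} ∈ ℝ^7 is an entropy vector of three finite-alphabet random variables. -/
open Finset

/-!
With `n = ⌈2 ^ l⌉` the vector splits as
`l1 • e1 + l2 • e2 + l3 • e3 + (l12 + l - log₂ n) • e12 + ((log₂ n - l) • e12 + l • e123')`,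
and `l12 + l - log₂ n ≥ 0` under either alternative of the hypothesis. Entropic vectors are
closed under addition: take independent copies and pair up the variables. A multiple `x • e_S` is
realised by a single source of entropy `x` shared by the variables in `S`; a distribution of
entropy `x` exists on `⌈2 ^ x⌉` letters by the intermediate value theorem. The last summand is
realised on `ZMod n` by `X₁ = A`, `X₂ = C - A`, `X₃ = C` with `A` uniform and `C` independent of
entropy `l`: both `A` and `C - A` are uniform, and any two of the three variables determine
`(A, C)`.
-/

open Real Function

section Entropy

variable {Ω Ω' α β γ : Type*} [Fintype Ω] [Fintype Ω'] [DecidableEq α] [DecidableEq β]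
  [DecidableEq γ]

def IsPMF (p : Ω → ℝ) : Prop :=
  (∀ ω, 0 ≤ p ω) ∧ ∑ ω, p ω = 1

noncomputable def law (p : Ω → ℝ) (X : Ω → α) (a : α) : ℝ :=
  ∑ ω, if X ω = a then p ω else 0

noncomputable def entropy [Fintype α] (p : Ω → ℝ) (X : Ω → α) : ℝ :=
  (∑ a, negMulLog (law p X a)) / log 2

lemma ent_eq_entropy {N : ℕ} {A : Type} [Fintype A] [DecidableEq A] (p : Fin N → ℝ)
    (X : Fin N → A) : ent p X = entropy p X := by
  simp only [ent, entropy, pr, law, negMulLog, logb, Finset.sum_div]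
  rw [← Finset.sum_neg_distrib]
  exact Finset.sum_congr rfl fun _ _ => by ring

lemma sum_law [Fintype α] (p : Ω → ℝ) (X : Ω → α) : ∑ a, law p X a = ∑ ω, p ω := by
  simp only [law]
  rw [Finset.sum_comm]
  simp

lemma law_comp_apply {f : α → β} (hf : Injective f) (p : Ω → ℝ) (X : Ω → α) (a : α) :
    law p (f ∘ X) (f a) = law p X a := by
  simp [law, hf.eq_iff]

lemma entropy_comp_injective [Fintype α] [Fintype β] {f : α → β} (hf : Injective f)
    (p : Ω → ℝ) (X : Ω → α) : entropy p (f ∘ X) = entropy p X := by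
  unfold entropy
  congr 1
  refine (Fintype.sum_of_injective f hf _ _ (fun b hb => ?_) fun a => ?_).symm
  · have : law p (f ∘ X) b = 0 := Finset.sum_eq_zero fun ω _ => if_neg fun h => hb ⟨X ω, h⟩
    rw [this, negMulLog_zero]
  · rw [law_comp_apply hf]

lemma entropy_comp_equiv [Fintype α] (e : Ω' ≃ Ω) (p : Ω → ℝ) (X : Ω → α) :
    entropy (p ∘ e) (X ∘ e) = entropy p X := by
  unfold entropy law
  congr! 3 with a
  exact Equiv.sum_comp e (fun ω => if X ω = a then p ω else 0)

lemma entropy_const [Fintype β] {p : Ω → ℝ} (hp : ∑ ω, p ω = 1) (b : β) :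
    entropy p (fun _ => b) = 0 := by
  simp [entropy, law, hp, apply_ite negMulLog]

lemma law_prod (p : Ω → ℝ) (p' : Ω' → ℝ) (X : Ω → α) (Y : Ω' → β) (c : α × β) :
    law (fun ω : Ω × Ω' => p ω.1 * p' ω.2) (fun ω => (X ω.1, Y ω.2)) c
      = law p X c.1 * law p' Y c.2 := by
  simp only [law, Fintype.sum_prod_type, Finset.sum_mul_sum, Prod.ext_iff, ite_and]
  refine Finset.sum_congr rfl fun ω _ => Finset.sum_congr rfl fun ω' _ => ?_
  split_ifs <;> simp

lemma entropy_prod [Fintype α] [Fintype β] {p : Ω → ℝ} {p' : Ω' → ℝ}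
    (hp : ∑ ω, p ω = 1) (hp' : ∑ ω, p' ω = 1) (X : Ω → α) (Y : Ω' → β) :
    entropy (fun ω : Ω × Ω' => p ω.1 * p' ω.2) (fun ω => (X ω.1, Y ω.2))
      = entropy p X + entropy p' Y := by
  simp only [entropy, law_prod, Fintype.sum_prod_type, negMulLog_mul, Finset.sum_add_distrib,
    ← Finset.sum_mul, ← Finset.mul_sum, sum_law, hp, hp', one_mul, add_div]

lemma IsPMF.prod {p : Ω → ℝ} {p' : Ω' → ℝ} (hp : IsPMF p) (hp' : IsPMF p') :
    IsPMF fun ω : Ω × Ω' => p ω.1 * p' ω.2 :=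
  ⟨fun ω => mul_nonneg (hp.1 _) (hp'.1 _), by
    simp only [Fintype.sum_prod_type, ← Finset.mul_sum, hp'.2, mul_one, hp.2]⟩

lemma entropy_relabel [Fintype α] [Fintype β] (e : Ω' ≃ Ω) {f : α → β} (hf : Injective f)
    (p : Ω → ℝ) (X : Ω → α) : entropy (p ∘ e) (fun ω => f (X (e ω))) = entropy p X :=
  (entropy_comp_equiv e p (f ∘ X)).trans (entropy_comp_injective hf p X)

lemma entropy_prod_comp [Fintype α] [Fintype β] [Fintype γ] {p : Ω → ℝ} {p' : Ω' → ℝ}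
    (hp : ∑ ω, p ω = 1) (hp' : ∑ ω, p' ω = 1) {f : α × β → γ} (hf : Injective f)
    (X : Ω → α) (Y : Ω' → β) :
    entropy (fun ω : Ω × Ω' => p ω.1 * p' ω.2) (fun ω => f (X ω.1, Y ω.2))
      = entropy p X + entropy p' Y :=
  (entropy_comp_injective hf _ fun ω : Ω × Ω' => (X ω.1, Y ω.2)).trans (entropy_prod hp hp' X Y)

end Entropy

section EntropyVector

variable {Ω Ω' α β γ α' β' γ' : Type*} [Fintype Ω] [Fintype Ω']
  [Fintype α] [DecidableEq α] [Fintype β] [DecidableEq β] [Fintype γ] [DecidableEq γ]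

noncomputable def entropyVec (p : Ω → ℝ) (X : Ω → α) (Y : Ω → β) (Z : Ω → γ) : Fin 7 → ℝ :=
  ![entropy p X, entropy p Y, entropy p Z,
    entropy p (fun ω => (X ω, Y ω)),
    entropy p (fun ω => (X ω, Z ω)),
    entropy p (fun ω => (Y ω, Z ω)),
    entropy p (fun ω => (X ω, Y ω, Z ω))]

lemma entVec3_eq_entropyVec {N a₁ a₂ a₃ : ℕ} (p : Fin N → ℝ)
    (X : Fin N → Fin a₁) (Y : Fin N → Fin a₂) (Z : Fin N → Fin a₃) :
    entVec3 p X Y Z = entropyVec p X Y Z := by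
  simp only [entVec3, entropyVec, ent_eq_entropy]

lemma entropyVec_relabel {α₀ β₀ γ₀ : Type*} [DecidableEq α₀] [DecidableEq β₀] [DecidableEq γ₀]
    [Fintype α₀] [Fintype β₀] [Fintype γ₀]
    (e : Ω' ≃ Ω) {f : α → α₀} {g : β → β₀} {h : γ → γ₀}
    (hf : Injective f) (hg : Injective g) (hh : Injective h) (p : Ω → ℝ)
    (X : Ω → α) (Y : Ω → β) (Z : Ω → γ) :
    entropyVec (p ∘ e) (fun ω => f (X (e ω))) (fun ω => g (Y (e ω))) (fun ω => h (Z (e ω)))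
      = entropyVec p X Y Z := by
  funext i
  fin_cases i
  · exact entropy_relabel e hf p X
  · exact entropy_relabel e hg p Y
  · exact entropy_relabel e hh p Z
  · exact entropy_relabel e (hf.prodMap hg) p fun ω => (X ω, Y ω)
  · exact entropy_relabel e (hf.prodMap hh) p fun ω => (X ω, Z ω)
  · exact entropy_relabel e (hg.prodMap hh) p fun ω => (Y ω, Z ω)
  · exact entropy_relabel e (hf.prodMap (hg.prodMap hh)) p fun ω => (X ω, Y ω, Z ω)

lemma isEntropic_entropyVec {p : Ω → ℝ} (hp : IsPMF p) (X : Ω → α) (Y : Ω → β) (Z : Ω → γ) :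
    IsEntropic (entropyVec p X Y Z) := by
  let e := (Fintype.equivFin Ω).symm
  refine ⟨_, _, _, _, p ∘ e, fun ω => Fintype.equivFin α (X (e ω)),
    fun ω => Fintype.equivFin β (Y (e ω)), fun ω => Fintype.equivFin γ (Z (e ω)),
    ⟨fun _ => hp.1 _, (e.sum_comp p).trans hp.2⟩, ?_⟩
  rw [entVec3_eq_entropyVec]
  exact entropyVec_relabel e (Equiv.injective _) (Equiv.injective _) (Equiv.injective _) p X Y Z

lemma entropyVec_prod [Fintype α'] [DecidableEq α'] [Fintype β'] [DecidableEq β']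
    [Fintype γ'] [DecidableEq γ'] {p : Ω → ℝ} {p' : Ω' → ℝ}
    (hp : ∑ ω, p ω = 1) (hp' : ∑ ω, p' ω = 1)
    (X : Ω → α) (Y : Ω → β) (Z : Ω → γ) (X' : Ω' → α') (Y' : Ω' → β') (Z' : Ω' → γ') :
    entropyVec (fun ω : Ω × Ω' => p ω.1 * p' ω.2) (fun ω => (X ω.1, X' ω.2))
        (fun ω => (Y ω.1, Y' ω.2)) (fun ω => (Z ω.1, Z' ω.2))
      = entropyVec p X Y Z + entropyVec p' X' Y' Z' := by
  funext i
  fin_cases i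
  · exact entropy_prod hp hp' X X'
  · exact entropy_prod hp hp' Y Y'
  · exact entropy_prod hp hp' Z Z'
  · exact entropy_prod_comp hp hp' (Equiv.prodProdProdComm ..).injective
      (fun ω => (X ω, Y ω)) fun ω => (X' ω, Y' ω)
  · exact entropy_prod_comp hp hp' (Equiv.prodProdProdComm ..).injective
      (fun ω => (X ω, Z ω)) fun ω => (X' ω, Z' ω)
  · exact entropy_prod_comp hp hp' (Equiv.prodProdProdComm ..).injective
      (fun ω => (Y ω, Z ω)) fun ω => (Y' ω, Z' ω)
  · exact entropy_prod_comp hp hp' ((Equiv.prodProdProdComm ..).trans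
      ((Equiv.refl _).prodCongr (Equiv.prodProdProdComm ..))).injective
      (fun ω => (X ω, Y ω, Z ω)) fun ω => (X' ω, Y' ω, Z' ω)

end EntropyVector

theorem IsEntropic.add {h h' : Fin 7 → ℝ} (hh : IsEntropic h) (hh' : IsEntropic h') :
    IsEntropic (h + h') := by
  obtain ⟨N, a₁, a₂, a₃, p, X, Y, Z, hp, rfl⟩ := hh
  obtain ⟨N', a₁', a₂', a₃', p', X', Y', Z', hp', rfl⟩ := hh'
  rw [entVec3_eq_entropyVec, entVec3_eq_entropyVec, ← entropyVec_prod hp.2 hp'.2]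
  exact isEntropic_entropyVec (IsPMF.prod hp hp') _ _ _

section Constructions

variable {α : Type*} [Fintype α] [DecidableEq α]

lemma law_id (q : α → ℝ) : law q id = q := by
  ext a
  simp [law]

lemma entropy_eq_logb_card {Ω : Type*} [Fintype Ω] {p : Ω → ℝ} {X : Ω → α}
    (h : ∀ a, law p X a = (Fintype.card α : ℝ)⁻¹) :
    entropy p X = logb 2 (Fintype.card α) := by
  simp only [entropy, h, Finset.sum_const, Finset.card_univ, nsmul_eq_mul, negMulLog, log_inv,
    logb]
  rcases Nat.eq_zero_or_pos (Fintype.card α) with h0 | h0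
  · simp [h0]
  · field_simp

lemma exists_pmf_entropy_eq [Nonempty α] {x : ℝ} (hx₀ : 0 ≤ x)
    (hx₁ : x ≤ logb 2 (Fintype.card α)) : ∃ q : α → ℝ, IsPMF q ∧ entropy q id = x := by
  obtain ⟨a₀⟩ := ‹Nonempty α›
  have hn : (0 : ℝ) < Fintype.card α := Nat.cast_pos.2 Fintype.card_pos
  -- interpolate between the point mass at `a₀` and the uniform distribution
  let q : ℝ → α → ℝ := fun t a => (1 - t) * (if a = a₀ then 1 else 0) + t / Fintype.card α
  have hq : ∀ t ∈ Set.Icc (0 : ℝ) 1, IsPMF (q t) := by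
    refine fun t ht => ⟨fun a => ?_, ?_⟩
    · have := ht.1; have := sub_nonneg.2 ht.2
      simp only [q]
      split_ifs <;> positivity
    · simp [q, Finset.sum_add_distrib, mul_div_cancel₀ _ hn.ne']
  have hcont : Continuous fun t => entropy (q t) id := by
    simp only [entropy, law_id, q]
    fun_prop
  have h₀ : entropy (q 0) id = 0 := by simp [entropy, law_id, q, apply_ite negMulLog]
  have h₁ : entropy (q 1) id = logb 2 (Fintype.card α) :=
    entropy_eq_logb_card fun a => by simp [law_id, q]
  obtain ⟨t, ht, hxt⟩ := intermediate_value_Icc zero_le_one hcont.continuousOn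
    (show x ∈ Set.Icc _ _ by rw [h₀, h₁]; exact ⟨hx₀, hx₁⟩)
  exact ⟨q t, hq t ht, hxt⟩

end Constructions

lemma le_logb_natCeil_two_rpow (x : ℝ) : x ≤ logb 2 ⌈(2 : ℝ) ^ x⌉₊ :=
  (le_logb_iff_rpow_le one_lt_two (by positivity)).2 (Nat.le_ceil _)

lemma exists_fin_pmf_entropy_eq {x : ℝ} (hx : 0 ≤ x) :
    ∃ (n : ℕ) (q : Fin n → ℝ), IsPMF q ∧ entropy q id = x := by
  have : Nonempty (Fin ⌈(2 : ℝ) ^ x⌉₊) := ⟨⟨0, Nat.ceil_pos.2 (by positivity)⟩⟩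
  exact ⟨_, exists_pmf_entropy_eq hx (by simpa using le_logb_natCeil_two_rpow x)⟩

lemma entropy_eq_entropy_id {Ω β : Type*} [Fintype Ω] [DecidableEq Ω] [Fintype β]
    [DecidableEq β] {X : Ω → β} (hX : Injective X) (p : Ω → ℝ) : entropy p X = entropy p id :=
  entropy_comp_injective hX p id

lemma isEntropic_smul_e1 {x : ℝ} (hx : 0 ≤ x) : IsEntropic (x • e1) := by
  obtain ⟨n, q, hq, rfl⟩ := exists_fin_pmf_entropy_eq hx
  convert isEntropic_entropyVec hq id (fun _ => ()) (fun _ => ()) using 1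
  funext i
  fin_cases i <;> simp [entropyVec, e1, entropy_const hq.2] <;>
    exact (entropy_eq_entropy_id (fun a b h => by simpa using h) q).symm

lemma isEntropic_smul_e2 {x : ℝ} (hx : 0 ≤ x) : IsEntropic (x • e2) := by
  obtain ⟨n, q, hq, rfl⟩ := exists_fin_pmf_entropy_eq hx
  convert isEntropic_entropyVec hq (fun _ => ()) id (fun _ => ()) using 1
  funext i
  fin_cases i <;> simp [entropyVec, e2, entropy_const hq.2] <;>
    exact (entropy_eq_entropy_id (fun a b h => by simpa using h) q).symm

lemma isEntropic_smul_e3 {x : ℝ} (hx : 0 ≤ x) : IsEntropic (x • e3) := by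
  obtain ⟨n, q, hq, rfl⟩ := exists_fin_pmf_entropy_eq hx
  convert isEntropic_entropyVec hq (fun _ => ()) (fun _ => ()) id using 1
  funext i
  fin_cases i <;> simp [entropyVec, e3, entropy_const hq.2] <;>
    exact (entropy_eq_entropy_id (fun a b h => by simpa using h) q).symm

lemma isEntropic_smul_e12 {x : ℝ} (hx : 0 ≤ x) : IsEntropic (x • e12) := by
  obtain ⟨n, q, hq, rfl⟩ := exists_fin_pmf_entropy_eq hx
  convert isEntropic_entropyVec hq id id (fun _ => ()) using 1
  funext i
  fin_cases i <;> simp [entropyVec, e12, entropy_const hq.2] <;>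
    exact (entropy_eq_entropy_id (fun a b h => by simpa using h) q).symm

section AddGroup

universe u

variable {G : Type u} [AddGroup G] [Fintype G] [DecidableEq G]

lemma law_sub_of_uniform {q : G → ℝ} (hq : ∑ c, q c = 1) (b : G) :
    law (fun ω : G × G => (Fintype.card G : ℝ)⁻¹ * q ω.2) (fun ω => ω.2 - ω.1) b
      = (Fintype.card G : ℝ)⁻¹ := by
  have hsub : ∀ a c : G, c - a = b ↔ -b + c = a := fun a c => by
    rw [sub_eq_iff_eq_add, neg_add_eq_iff_eq_add]
  simp only [law, Fintype.sum_prod_type]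
  rw [Finset.sum_comm]
  simp [hsub, ← Finset.mul_sum, hq]

lemma isEntropic_smul_e12_add_smul_e123' {x : ℝ} (hx₀ : 0 ≤ x)
    (hx₁ : x ≤ logb 2 (Fintype.card G)) :
    IsEntropic ((logb 2 (Fintype.card G) - x) • e12 + x • e123') := by
  have : Nonempty G := ⟨0⟩
  obtain ⟨q, hq, rfl⟩ := exists_pmf_entropy_eq hx₀ hx₁
  set u : G → ℝ := fun _ => (Fintype.card G : ℝ)⁻¹
  have hu : IsPMF u := ⟨fun _ => by positivity, by simp [u]⟩
  have hu_ent : entropy u id = logb 2 (Fintype.card G) :=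
    entropy_eq_logb_card (by simp [law_id, u])
  have hinj : ∀ {β : Type u} [Fintype β] [DecidableEq β] {f : G × G → β}, Injective f →
      entropy (fun ω : G × G => u ω.1 * q ω.2) f = logb 2 (Fintype.card G) + entropy q id :=
    fun hf => (entropy_prod_comp hu.2 hq.2 hf id id).trans (by rw [hu_ent])
  have hA : entropy (fun ω : G × G => u ω.1 * q ω.2) Prod.fst = logb 2 (Fintype.card G) := by
    have := entropy_prod_comp hu.2 hq.2 (f := Prod.fst) (fun a b h => Prod.ext h rfl) id
      fun _ => ()
    rwa [entropy_const hq.2, add_zero, hu_ent] at this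
  have hC : entropy (fun ω : G × G => u ω.1 * q ω.2) Prod.snd = entropy q id := by
    have := entropy_prod_comp hu.2 hq.2 (f := Prod.snd) (fun a b h => Prod.ext rfl h)
      (fun _ => ()) id
    rwa [entropy_const hu.2, zero_add] at this
  have hD : entropy (fun ω : G × G => u ω.1 * q ω.2) (fun ω => ω.2 - ω.1)
      = logb 2 (Fintype.card G) := entropy_eq_logb_card (law_sub_of_uniform hq.2)
  convert isEntropic_entropyVec (hu.prod hq) Prod.fst (fun ω => ω.2 - ω.1) Prod.snd using 1
  funext i
  fin_cases i <;> simp [entropyVec, e12, e123', hA, hC, hD]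
  all_goals
    rw [hinj (by rintro ⟨a, c⟩ ⟨a', c'⟩ h; simp only [Prod.mk.injEq] at h ⊢; aesop)]
    ring

end AddGroup

/-- If λ₁,λ₂,λ₃,λ₁₂,λ₁₂₃' ≥ 0 and either λ₁₂+λ₁₂₃' ≥ log₂⌈2^{λ₁₂₃'}⌉ or
λ₁₂₃' = log₂ m for a positive integer m, then
λ₁e₁+λ₂e₂+λ₃e₃+λ₁₂e₁₂+λ₁₂₃'e₁₂₃' is an entropy vector. -/
theorem stmt10 (l1 l2 l3 l12 l : ℝ)
    (h1 : 0 ≤ l1) (h2 : 0 ≤ l2) (h3 : 0 ≤ l3) (h12 : 0 ≤ l12) (hl : 0 ≤ l)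
    (hcond : l12 + l ≥ Real.logb 2 ((⌈(2:ℝ) ^ l⌉ : ℤ) : ℝ) ∨
             ∃ m : ℕ, 0 < m ∧ l = Real.logb 2 (m : ℝ)) :
    IsEntropic (l1 • e1 + l2 • e2 + l3 • e3 + l12 • e12 + l • e123') := by
  have hn : logb 2 ⌈(2 : ℝ) ^ l⌉₊ ≤ l12 + l := by
    rcases hcond with hc | ⟨m, hm, rfl⟩
    · rwa [natCast_ceil_eq_intCast_ceil (by positivity)]
    · rw [rpow_logb two_pos (by norm_num) (by positivity), Nat.ceil_natCast]
      linarith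
  have : NeZero ⌈(2 : ℝ) ^ l⌉₊ := ⟨(Nat.ceil_pos.2 (by positivity)).ne'⟩
  have hcore := isEntropic_smul_e12_add_smul_e123' (G := ZMod ⌈(2 : ℝ) ^ l⌉₊) hl
    (by simpa using le_logb_natCeil_two_rpow l)
  rw [ZMod.card] at hcore
  have hsplit : l1 • e1 + l2 • e2 + l3 • e3 + l12 • e12 + l • e123'
      = l1 • e1 + l2 • e2 + l3 • e3 + (l12 + l - logb 2 ⌈(2 : ℝ) ^ l⌉₊) • e12
        + ((logb 2 ⌈(2 : ℝ) ^ l⌉₊ - l) • e12 + l • e123') := by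
    module
  rw [hsplit]
  exact ((((isEntropic_smul_e1 h1).add (isEntropic_smul_e2 h2)).add
    (isEntropic_smul_e3 h3)).add (isEntropic_smul_e12 (by linarith))).add hcore
end
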